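/- arXiv:1006.1845 — 2 statements merged into one kernel-verified Lean document; each statement's English description precedes it below -/
import Mathlib

section
/- Let n ≥ 1 and let f, g ∈ L¹(ℝⁿ; ℂ) be compactly supported and not almost everywhere zero. Then the convolution f * g is not almost everywhere zero. -/
/-!
Taking Fourier transforms, `f * g = 0` forces `𝓕 f · 𝓕 g = 0`. Since the Fourier transform is
injective on `L¹`, `𝓕 f` is nonzero somewhere, hence on an open set by continuity, so `𝓕 g`
vanishes on that open set. As `g` has compact support, the restriction of `𝓕 g` to any real line
extends to an entire function, so by the identity theorem `𝓕 g = 0` everywhere, and injectivity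
again gives `g = 0`. The Fourier transform needs an inner product, so the argument runs on
`EuclideanSpace ℝ (Fin n)`, which carries the same Lebesgue measure as `Fin n → ℝ`.
-/

open MeasureTheory

/-- The convolution of two integrable functions on `ℝⁿ`. -/
noncomputable def conv {n : ℕ} (f g : (Fin n → ℝ) → ℂ) : (Fin n → ℝ) → ℂ :=
  fun x => ∫ t, f t * g (x - t)

/-- A function vanishes almost everywhere outside some compact set. -/
def AECompactlySupported {n : ℕ} (f : (Fin n → ℝ) → ℂ) : Prop :=
  ∃ K : Set (Fin n → ℝ), IsCompact K ∧ ∀ᵐ x ∂(volume), x ∉ K → f x = 0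

open Complex Filter Topology FourierTransform WithLp
open scoped RealInnerProductSpace Convolution

theorem differentiable_integral_cexp_mul_smul {α E : Type*} [MeasurableSpace α] {μ : Measure α}
    [NormedAddCommGroup E] [NormedSpace ℂ E] {h : α → E} {u : α → ℂ}
    (hh : Integrable h μ) (hu : AEStronglyMeasurable u μ) {M : ℝ}
    (huM : ∀ᵐ t ∂μ, ‖u t‖ ≤ M) :
    Differentiable ℂ fun z ↦ ∫ t, cexp (z * u t) • h t ∂μ := by
  intro z₀
  have hmeas : ∀ z : ℂ, AEStronglyMeasurable (fun t ↦ cexp (z * u t) • h t) μ := fun z ↦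
    (continuous_exp.comp_aestronglyMeasurable (hu.const_mul z)).smul hh.aestronglyMeasurable
  have hexp (z : ℂ) (t : α) (ht : ‖u t‖ ≤ M) : ‖cexp (z * u t)‖ ≤ Real.exp (‖z‖ * M) := by
    rw [norm_exp]
    gcongr
    calc (z * u t).re ≤ ‖z * u t‖ := re_le_norm _
      _ ≤ ‖z‖ * M := by rw [norm_mul]; gcongr
  have hint : Integrable (fun t ↦ cexp (z₀ * u t) • h t) μ := by
    refine (hh.norm.const_mul (Real.exp (‖z₀‖ * M))).mono' (hmeas z₀) ?_
    filter_upwards [huM] with t ht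
    rw [norm_smul]
    gcongr
    exact hexp z₀ t ht
  have hderiv := hasDerivAt_integral_of_dominated_loc_of_deriv_le (μ := μ)
    (F' := fun z t ↦ (u t * cexp (z * u t)) • h t)
    (bound := fun t ↦ (M * Real.exp ((‖z₀‖ + 1) * M)) * ‖h t‖)
    (Metric.ball_mem_nhds z₀ one_pos) (Eventually.of_forall hmeas) hint
    ((hu.mul (continuous_exp.comp_aestronglyMeasurable (hu.const_mul z₀))).smul
      hh.aestronglyMeasurable) ?_ (hh.norm.const_mul _) ?_
  · exact hderiv.2.differentiableAt
  · filter_upwards [huM] with t ht z hz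
    have hz : ‖z‖ ≤ ‖z₀‖ + 1 := by
      have := norm_le_norm_add_norm_sub' z z₀
      rw [Metric.mem_ball, dist_eq_norm] at hz
      linarith
    have hM : 0 ≤ M := (norm_nonneg _).trans ht
    rw [norm_smul, norm_mul]
    gcongr
    exact (hexp z t ht).trans (Real.exp_le_exp.2 (by gcongr))
  · filter_upwards with t z _
    simpa [mul_comm] using ((hasDerivAt_id z).mul_const (u t)).cexp.smul_const (h t)

theorem Differentiable.eq_zero_of_eventually_ofReal_eq_zero {F : ℂ → ℂ}
    (hF : Differentiable ℂ F) (h : ∀ᶠ s : ℝ in 𝓝 0, F s = 0) : F = 0 := by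
  have hfreq : ∃ᶠ z in 𝓝[≠] (0 : ℂ), F z = 0 := by
    have hreal : Tendsto ((↑) : ℝ → ℂ) (𝓝[≠] 0) (𝓝[≠] 0) :=
      tendsto_nhdsWithin_of_tendsto_nhds_of_eventually_within _
        ((continuous_ofReal.tendsto' 0 0 ofReal_zero).mono_left nhdsWithin_le_nhds)
        (eventually_nhdsWithin_of_forall fun s hs ↦ ofReal_ne_zero.2 hs)
    exact hreal.frequently (eventually_nhdsWithin_of_eventually_nhds h).frequently
  funext z
  exact (hF.differentiableOn.analyticOnNhd isOpen_univ)
    |>.eqOn_zero_of_preconnected_of_frequently_eq_zero isPreconnected_univ (Set.mem_univ 0) hfreq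
      (Set.mem_univ z)

theorem MeasureTheory.MeasurePreserving.ae_eq_zero_of_comp {α β E : Type*} [MeasurableSpace α]
    [MeasurableSpace β] [Zero E] {μ : Measure α} {ν : Measure β} {e : α → β}
    (he : MeasurePreserving e μ ν) (he' : MeasurableEmbedding e) {f : β → E}
    (hf : f ∘ e =ᵐ[μ] 0) : f =ᵐ[ν] 0 := by
  rw [← he.map_eq]
  exact he'.ae_map_iff.2 hf

section InnerProductSpace

variable {V : Type*} [NormedAddCommGroup V] [InnerProductSpace ℝ V] [FiniteDimensional ℝ V]
  [MeasurableSpace V] [BorelSpace V]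

theorem ae_eq_zero_of_fourier_eq_zero {f : V → ℂ} (hf : Integrable f) (h : 𝓕 f = 0) :
    f =ᵐ[volume] 0 := by
  -- A test function `φ` is the Fourier transform of a Schwartz function, and `𝓕` is self-adjoint.
  refine ae_eq_zero_of_integral_contDiff_smul_eq_zero hf.locallyIntegrable fun φ hφ hφc ↦ ?_
  set Φ : SchwartzMap V ℂ :=
    (hφc.comp_left ofReal_zero).toSchwartzMap (ofRealCLM.contDiff.comp hφ)
  have hΦ : 𝓕 (𝓕⁻ Φ) = Φ := FourierTransform.fourier_fourierInv_eq Φ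
  calc ∫ x, φ x • f x = ∫ x, 𝓕 (𝓕⁻ Φ) x • f x := by rw [hΦ]; rfl
    _ = ∫ x, (𝓕⁻ Φ) x • 𝓕 f x := by
      have := VectorFourier.integral_fourierIntegral_smul_eq_flip (L := innerₗ V)
        Real.continuous_fourierChar continuous_inner ((𝓕⁻ Φ).integrable (μ := volume)) hf
      rw [flip_innerₗ] at this
      exact this
    _ = 0 := by simp [h]

theorem exists_differentiable_eq_fourier_add_smul {g : V → ℂ} {K : Set V} (hg : Integrable g)
    (hK : IsCompact K) (hgK : ∀ᵐ x, x ∉ K → g x = 0) (ξ₀ v : V) :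
    ∃ F : ℂ → ℂ, Differentiable ℂ F ∧ ∀ s : ℝ, F s = 𝓕 g (ξ₀ + s • v) := by
  set u : V → ℂ := fun t ↦ ↑(-2 * Real.pi * ⟪t, v⟫) * I
  have hu : Continuous u := by fun_prop
  obtain ⟨M, hM⟩ := hK.exists_bound_of_continuousOn hu.continuousOn
  have hphase (s : ℝ) (t : V) :
      cexp (s * u t) • 𝐞 (-⟪t, ξ₀⟫) • g t = 𝐞 (-⟪t, ξ₀ + s • v⟫) • g t := by
    simp only [u, Circle.smul_def, Real.fourierChar_apply, smul_eq_mul, inner_add_right,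
      real_inner_smul_right, ← mul_assoc, ← exp_add]
    congr 2
    push_cast
    ring
  -- Complexify `s` in the kernel `𝐞 (-⟪t, ξ₀ + s • v⟫)`; the phase `u` is bounded on `K`.
  refine ⟨fun z ↦ ∫ t in K, cexp (z * u t) • 𝐞 (-⟪t, ξ₀⟫) • g t,
    differentiable_integral_cexp_mul_smul
      ((Real.fourierIntegral_convergent_iff ξ₀).2 hg).integrableOn hu.aestronglyMeasurable
      (ae_restrict_of_forall_mem hK.measurableSet hM), fun s ↦ ?_⟩
  simp only [hphase, Real.fourier_eq]
  refine setIntegral_eq_integral_of_ae_compl_eq_zero ?_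
  filter_upwards [hgK] with t ht htK
  rw [ht htK, smul_zero]

theorem fourier_eq_zero_of_eqOn_zero {g : V → ℂ} {K : Set V} (hg : Integrable g)
    (hK : IsCompact K) (hgK : ∀ᵐ x, x ∉ K → g x = 0) {U : Set V} (hU : IsOpen U)
    (hUne : U.Nonempty) (hgU : Set.EqOn (𝓕 g) 0 U) : 𝓕 g = 0 := by
  obtain ⟨ξ₀, hξ₀⟩ := hUne
  funext ξ
  obtain ⟨F, hF, hFg⟩ := exists_differentiable_eq_fourier_add_smul hg hK hgK ξ₀ (ξ - ξ₀)
  have hline : Tendsto (fun s : ℝ ↦ ξ₀ + s • (ξ - ξ₀)) (𝓝 0) (𝓝 ξ₀) := by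
    simpa using ((continuous_id.smul continuous_const).const_add ξ₀).tendsto (0 : ℝ)
  have hF0 : F = 0 := hF.eq_zero_of_eventually_ofReal_eq_zero <|
    (hline.eventually (hU.mem_nhds hξ₀)).mono fun s hs ↦ (hFg s).trans (hgU hs)
  simpa [hF0] using (hFg 1).symm

theorem eq_zero_or_eq_zero_of_convolution_eq_zero {f g : V → ℂ} {K : Set V}
    (hf : Integrable f) (hg : Integrable g) (hK : IsCompact K) (hgK : ∀ᵐ x, x ∉ K → g x = 0)
    (hfg : f ⋆[ContinuousLinearMap.mul ℂ ℂ] g =ᵐ[volume] 0) :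
    f =ᵐ[volume] 0 ∨ g =ᵐ[volume] 0 := by
  have hprod : ∀ ξ, 𝓕 f ξ * 𝓕 g ξ = 0 := fun ξ ↦ by
    rw [← Real.fourier_mul_convolution_eq hf hg, Real.fourier_congr_ae hfg]
    simp [Real.fourier_eq]
  by_contra! ⟨hf0, hg0⟩
  obtain ⟨ξ₀, hξ₀⟩ : ∃ ξ, 𝓕 f ξ ≠ 0 := by
    by_contra! hf0'
    exact hf0 (ae_eq_zero_of_fourier_eq_zero hf (funext hf0'))
  have hU : IsOpen {ξ | 𝓕 f ξ ≠ 0} := isOpen_ne_fun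
    (VectorFourier.fourierIntegral_continuous Real.continuous_fourierChar continuous_inner hf)
    continuous_const
  exact hg0 (ae_eq_zero_of_fourier_eq_zero hg (fourier_eq_zero_of_eqOn_zero hg hK hgK hU
    ⟨ξ₀, hξ₀⟩ fun ξ hξ ↦ (mul_eq_zero.1 (hprod ξ)).resolve_left hξ))

end InnerProductSpace

theorem convolution_comp_ofLp (n : ℕ) (f g : (Fin n → ℝ) → ℂ) (x : EuclideanSpace ℝ (Fin n)) :
    ((f ∘ ofLp) ⋆[ContinuousLinearMap.mul ℂ ℂ] (g ∘ ofLp)) x = conv f g (ofLp x) := by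
  simp only [convolution, Function.comp_apply, WithLp.ofLp_sub, ContinuousLinearMap.mul_apply']
  exact (PiLp.volume_preserving_ofLp (Fin n)).integral_comp
    (MeasurableEquiv.toLp 2 (Fin n → ℝ)).symm.measurableEmbedding fun t ↦ f t * g (ofLp x - t)

theorem convolution_ne_zero_of_compactly_supported_general
    (n : ℕ) (f g : (Fin n → ℝ) → ℂ)
    (hf : Integrable f) (hg : Integrable g)
    (hgc : AECompactlySupported g)
    (hf0 : ¬ f =ᵐ[volume] 0) (hg0 : ¬ g =ᵐ[volume] 0) :
    ¬ conv f g =ᵐ[volume] 0 := by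
  intro hconv
  have he := PiLp.volume_preserving_ofLp (Fin n)
  have he' := (MeasurableEquiv.toLp 2 (Fin n → ℝ)).symm.measurableEmbedding
  obtain ⟨K, hK, hgK⟩ := hgc
  have hfg : (f ∘ ofLp) ⋆[ContinuousLinearMap.mul ℂ ℂ] (g ∘ ofLp)
      =ᵐ[volume] (0 : EuclideanSpace ℝ (Fin n) → ℂ) := by
    filter_upwards [he.quasiMeasurePreserving.ae hconv] with x hx
    exact (convolution_comp_ofLp n f g x).trans hx
  rcases eq_zero_or_eq_zero_of_convolution_eq_zero ((he.integrable_comp_emb he').2 hf)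
      ((he.integrable_comp_emb he').2 hg) ((PiLp.homeomorph 2 _).isCompact_preimage.2 hK)
      (he.quasiMeasurePreserving.ae hgK) hfg with h | h
  exacts [hf0 (he.ae_eq_zero_of_comp he' h), hg0 (he.ae_eq_zero_of_comp he' h)]

/-- If `f, g ∈ L¹(ℝⁿ)` are compactly supported and not a.e. zero, then `f * g` is
not a.e. zero. -/
theorem convolution_ne_zero_of_compactly_supported
    (n : ℕ) (hn : 1 ≤ n) (f g : (Fin n → ℝ) → ℂ)
    (hf : Integrable f) (hg : Integrable g)
    (hfc : AECompactlySupported f) (hgc : AECompactlySupported g)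
    (hf0 : ¬ f =ᵐ[volume] 0) (hg0 : ¬ g =ᵐ[volume] 0) :
    ¬ conv f g =ᵐ[volume] 0 :=
  convolution_ne_zero_of_compactly_supported_general n f g hf hg hgc hf0 hg0
end

section
/- Let a < b and let f ∈ L²(ℝ; ℂ) vanish almost everywhere outside [a,b] and satisfy ∫_ℝ f(t) dt = 0. Then Tf vanishes outside [a,b], Tf ∈ L²(ℝ; ℂ), and ‖Tf‖₂ ≤ ((b−a)/√2) · ‖f‖₂. -/
/-!
Since `f` vanishes to the left of `a`, `Tf(x) = ∫_{[a,x]} f` for every `x`: this is `0` for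
`x < a`, and `∫ f = 0` for `x > b`. On `[a, b]`, Cauchy–Schwarz gives `|Tf(x)|² ≤ ‖f‖₂² (x - a)`,
and integrating over `[a, b]` yields `‖Tf‖₂² ≤ ‖f‖₂² (b - a)² / 2`, the right-hand side being
`‖f‖₂²` times the squared `L²` norm of the kernel `K_{[a,b]}`.
-/

open MeasureTheory

noncomputable def T (f : ℝ → ℂ) : ℝ → ℂ := fun x => ∫ t in Set.Iic x, f t

open Set
open scoped ENNReal

section LpTwo

variable {α E : Type*} [MeasurableSpace α] [NormedAddCommGroup E] {μ : Measure α} {f : α → E}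

theorem MeasureTheory.MemLp.integrable_of_ae_notMem_eq_zero {p : ℝ≥0∞} {s : Set α}
    (hf : MemLp f p μ) (hp : 1 ≤ p) (hs : μ s ≠ ∞) (h : ∀ᵐ x ∂μ, x ∉ s → f x = 0) :
    Integrable f μ :=
  have : IsFiniteMeasure (μ.restrict s) := isFiniteMeasure_restrict.2 hs
  IntegrableOn.integrable_of_ae_notMem_eq_zero ((hf.restrict s).integrable hp) h

theorem eLpNorm_two_sq_eq_lintegral {ε : Type*} [ENorm ε] (g : α → ε) :
    eLpNorm g 2 μ ^ 2 = ∫⁻ x, ‖g x‖ₑ ^ 2 ∂μ := by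
  simpa using eLpNorm_nnreal_pow_eq_lintegral (μ := μ) (f := g) (p := 2) two_ne_zero

theorem enorm_setIntegral_sq_le [NormedSpace ℝ E] (hf : AEStronglyMeasurable f μ) (s : Set α) :
    ‖∫ x in s, f x ∂μ‖ₑ ^ 2 ≤ eLpNorm f 2 μ ^ 2 * μ s := by
  have holder : ‖∫ x in s, f x ∂μ‖ₑ ≤ eLpNorm f 2 μ * μ s ^ (1 / 2 : ℝ) :=
    calc ‖∫ x in s, f x ∂μ‖ₑ ≤ eLpNorm f 1 (μ.restrict s) := by
          rw [eLpNorm_one_eq_lintegral_enorm]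
          exact enorm_integral_le_lintegral_enorm _
      _ ≤ eLpNorm f 2 (μ.restrict s) *
            μ.restrict s univ ^ (1 / (1 : ℝ≥0∞).toReal - 1 / (2 : ℝ≥0∞).toReal) :=
          eLpNorm_le_eLpNorm_mul_rpow_measure_univ one_le_two hf.restrict
      _ = eLpNorm f 2 (μ.restrict s) * μ s ^ (1 / 2 : ℝ) := by
          rw [Measure.restrict_apply_univ]
          norm_num
      _ ≤ eLpNorm f 2 μ * μ s ^ (1 / 2 : ℝ) := by
          gcongr ?_ * _
          exact eLpNorm_restrict_le f 2 μ s
  calc _ ≤ (eLpNorm f 2 μ * μ s ^ (1 / 2 : ℝ)) ^ 2 := by gcongr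
    _ = eLpNorm f 2 μ ^ 2 * μ s := by
      rw [mul_pow, ← ENNReal.rpow_natCast (μ s ^ _), ← ENNReal.rpow_mul]
      norm_num

end LpTwo

theorem lintegral_Icc_ofReal_sub {a b : ℝ} (hab : a ≤ b) :
    ∫⁻ x in Icc a b, ENNReal.ofReal (x - a) = ENNReal.ofReal ((b - a) ^ 2 / 2) := by
  rw [← ofReal_integral_eq_lintegral_ofReal, integral_Icc_eq_integral_Ioc,
    ← intervalIntegral.integral_of_le hab, intervalIntegral.integral_sub
      intervalIntegral.intervalIntegrable_id intervalIntegrable_const]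
  · simp only [integral_id, intervalIntegral.integral_const, smul_eq_mul]
    congr 1
    ring
  · exact (continuous_id.sub continuous_const).integrableOn_Icc
  · filter_upwards [ae_restrict_mem measurableSet_Icc] with x hx
    exact sub_nonneg.2 hx.1

section Antiderivative

variable {a b : ℝ} {f : ℝ → ℂ}

theorem continuous_T (hf : Integrable f) : Continuous (T f) := by
  have hT : T f = fun x => (∫ t in (0 : ℝ)..x, f t) + T f 0 := by
    funext x
    rw [← intervalIntegral.integral_Iic_sub_Iic hf.integrableOn hf.integrableOn]
    simp only [T, sub_add_cancel]
  rw [hT]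
  exact (hf.continuous_primitive 0).add continuous_const

variable (hsupp : ∀ᵐ t, t ∉ Icc a b → f t = 0)
include hsupp

theorem T_eq_setIntegral_Icc (x : ℝ) : T f x = ∫ t in Icc a x, f t := by
  show ∫ t in Iic x, f t = _
  refine setIntegral_eq_of_subset_of_ae_sdiff_eq_zero nullMeasurableSet_Iic
    (fun t ht => ht.2) ?_
  filter_upwards [hsupp] with t ht ⟨htx, hta⟩
  exact ht fun h => hta ⟨h.1, htx⟩

theorem T_eq_integral_of_le {x : ℝ} (hx : b ≤ x) : T f x = ∫ t, f t :=
  setIntegral_eq_integral_of_ae_compl_eq_zero <| by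
    filter_upwards [hsupp] with t ht htx
    exact ht fun h => htx (h.2.trans hx)

theorem T_eq_zero_of_notMem_Icc (hint : ∫ t, f t = 0) {x : ℝ} (hx : x ∉ Icc a b) :
    T f x = 0 := by
  rcases le_or_gt x b with hxb | hbx
  · have hempty : Icc a x = ∅ := Icc_eq_empty fun hax => hx ⟨hax, hxb⟩
    rw [T_eq_setIntegral_Icc hsupp x, hempty, Measure.restrict_empty, integral_zero_measure]
  · rw [T_eq_integral_of_le hsupp hbx.le, hint]

theorem enorm_T_sq_le (hf : AEStronglyMeasurable f) (x : ℝ) :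
    ‖T f x‖ₑ ^ 2 ≤ eLpNorm f 2 volume ^ 2 * ENNReal.ofReal (x - a) := by
  rw [T_eq_setIntegral_Icc hsupp x, ← Real.volume_Icc]
  exact enorm_setIntegral_sq_le hf _

theorem lintegral_enorm_T_sq_le (hab : a ≤ b) (hf : MemLp f 2 volume) (hint : ∫ t, f t = 0) :
    ∫⁻ x, ‖T f x‖ₑ ^ 2 ≤ eLpNorm f 2 volume ^ 2 * ENNReal.ofReal ((b - a) ^ 2 / 2) := by
  have hsub : (fun x => ‖T f x‖ₑ ^ 2).support ⊆ Icc a b := fun x hx => by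
    by_contra hx'
    simp [T_eq_zero_of_notMem_Icc hsupp hint hx'] at hx
  calc ∫⁻ x, ‖T f x‖ₑ ^ 2 = ∫⁻ x in Icc a b, ‖T f x‖ₑ ^ 2 :=
        (setLIntegral_eq_of_support_subset hsub).symm
    _ ≤ ∫⁻ x in Icc a b, eLpNorm f 2 volume ^ 2 * ENNReal.ofReal (x - a) :=
        setLIntegral_mono' measurableSet_Icc fun x _ => enorm_T_sq_le hsupp hf.1 x
    _ = eLpNorm f 2 volume ^ 2 * ENNReal.ofReal ((b - a) ^ 2 / 2) := by
        rw [lintegral_const_mul' _ _ (ENNReal.pow_ne_top hf.eLpNorm_ne_top),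
          lintegral_Icc_ofReal_sub hab]

end Antiderivative

/-- If `f ∈ L²(ℝ)` vanishes a.e. outside `[a,b]` and has zero integral, then `Tf`
vanishes outside `[a,b]`, lies in `L²(ℝ)`, and `‖Tf‖₂ ≤ ((b-a)/√2)‖f‖₂`. -/
theorem T_bound (a b : ℝ) (hab : a < b) (f : ℝ → ℂ)
    (hf : MemLp f 2 volume)
    (hsupp : ∀ᵐ x ∂(volume), x ∉ Set.Icc a b → f x = 0)
    (hint : ∫ t, f t = 0) :
    (∀ x ∉ Set.Icc a b, T f x = 0) ∧ MemLp (T f) 2 volume ∧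
      eLpNorm (T f) 2 volume ≤
        ENNReal.ofReal ((b - a) / Real.sqrt 2) * eLpNorm f 2 volume := by
  have hfi : Integrable f :=
    hf.integrable_of_ae_notMem_eq_zero one_le_two (by simp [Real.volume_Icc]) hsupp
  have hbound : eLpNorm (T f) 2 volume ≤
      ENNReal.ofReal ((b - a) / Real.sqrt 2) * eLpNorm f 2 volume := by
    rw [← ENNReal.pow_le_pow_left_iff two_ne_zero, eLpNorm_two_sq_eq_lintegral, mul_pow,
      ← ENNReal.ofReal_pow (div_nonneg (sub_nonneg.2 hab.le) (Real.sqrt_nonneg 2)), div_pow,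
      Real.sq_sqrt zero_le_two, mul_comm]
    exact lintegral_enorm_T_sq_le hsupp hab.le hf hint
  exact ⟨fun x => T_eq_zero_of_notMem_Icc hsupp hint,
    ⟨(continuous_T hfi).aestronglyMeasurable,
      hbound.trans_lt (ENNReal.mul_lt_top ENNReal.ofReal_lt_top hf.eLpNorm_lt_top)⟩, hbound⟩
end
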